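/- arXiv:2112.06679 — 2 statements merged into one kernel-verified Lean document; each statement's English description precedes it below -/
import Mathlib

section
/- For all integers m ≥ 2 and l ≥ 0, the chromatic symmetric function of the line graph of the tadpole satisfies X_{L(Tp_{m,l})} = X_{P_l}·X_{C_m} + 2·Σ_{k=1}^{l} X_{P_{l−k}}·X_{C_{m+k}} − 2l·X_{P_{m+l}}. -/
open Finset

noncomputable section

/-- The ring in which symmetric functions live: formal power series in the
countably many commuting variables `x_0, x_1, x_2, …` with rational coefficients. -/
abbrev SymFun : Type := MvPowerSeries ℕ ℚ

/-- The chromatic symmetric function of a finite graph `G`: the coefficient of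
the monomial `∏ i, x_i ^ d i` is the number of proper colorings `κ : V → ℕ`
whose color-class sizes are prescribed by `d`. -/
def csf {V : Type} [Fintype V] (G : SimpleGraph V) : SymFun :=
  fun d => (Nat.card {κ : V → ℕ //
    (∀ v w : V, G.Adj v w → κ v ≠ κ w) ∧
    ∀ i : ℕ, Nat.card {v : V // κ v = i} = d i} : ℚ)

/-- The path `P_n` on `n` vertices. -/
def pathG (n : ℕ) : SimpleGraph (Fin n) :=
  SimpleGraph.fromRel (fun i j => (i : ℕ) + 1 = (j : ℕ))

/-- The cycle `C_n` on `n` vertices (for `n = 2` this is the single edge `K₂`). -/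
def cycleG (n : ℕ) : SimpleGraph (Fin n) :=
  SimpleGraph.fromRel (fun i j => ((i : ℕ) + 1) % n = (j : ℕ))

/-- The tadpole `Tp_{m,l}`: the disjoint union of the cycle `C_m` and the path `P_l`
together with one edge joining a vertex of the cycle to an end of the path. -/
def tadpole (m l : ℕ) : SimpleGraph (Fin m ⊕ Fin l) :=
  SimpleGraph.fromRel (fun a b =>
    match a, b with
    | Sum.inl i, Sum.inl j => ((i : ℕ) + 1) % m = (j : ℕ)
    | Sum.inr i, Sum.inr j => (i : ℕ) + 1 = (j : ℕ)
    | Sum.inl i, Sum.inr j => (i : ℕ) = 0 ∧ (j : ℕ) = 0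
    | _, _ => False)

/-- The line graph of the tadpole `Tp_{m,l}`, described explicitly:
the disjoint union of the cycle `C_m` and the path `P_l` together with two edges
joining an end `w` of the path to two adjacent vertices `u, v` of the cycle. -/
def lineTadpole (m l : ℕ) : SimpleGraph (Fin m ⊕ Fin l) :=
  SimpleGraph.fromRel (fun a b =>
    match a, b with
    | Sum.inl i, Sum.inl j => ((i : ℕ) + 1) % m = (j : ℕ)
    | Sum.inr i, Sum.inr j => (i : ℕ) + 1 = (j : ℕ)
    | Sum.inl i, Sum.inr j => ((i : ℕ) = 0 ∨ (i : ℕ) = 1) ∧ (j : ℕ) = 0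
    | _, _ => False)

/-- The cycle-chord graph `CC_{a,b}`: the cycle `C_{a+b}` on vertices
`v_0, …, v_{a+b-1}` together with the chord `v_0 v_a`. -/
def cycleChord (a b : ℕ) : SimpleGraph (Fin (a + b)) :=
  SimpleGraph.fromRel (fun i j =>
    ((i : ℕ) + 1) % (a + b) = (j : ℕ) ∨ ((i : ℕ) = 0 ∧ (j : ℕ) = a))

open Classical in
/-- The elementary symmetric function `e_r`. -/
def eSym (r : ℕ) : SymFun :=
  fun d => if (∀ i, d i ≤ 1) ∧ (d.sum fun _ k => k) = r then 1 else 0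

open Classical in
/-- The power sum symmetric function `p_n = Σ_i x_i^n` (for `n ≥ 1`). -/
def pSym (n : ℕ) : SymFun :=
  fun d => if n ≠ 0 ∧ ∃ i : ℕ, d = Finsupp.single i n then 1 else 0

/-- `e_λ = e_{λ_1} ⋯ e_{λ_k}` for a partition `λ` of `n`. -/
def eProd {n : ℕ} (P : n.Partition) : SymFun := (P.parts.map eSym).prod

/-- The ring of formal power series in two variables `x = X 0` and `y = X 1`
over the ring of symmetric functions. -/
abbrev Big : Type := MvPowerSeries (Fin 2) SymFun

/-- The bivariate generating function `Σ_{a,b ≥ 0} c a b · x^a y^b`. -/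
def gf2 (c : ℕ → ℕ → SymFun) : Big := fun d => c (d 0) (d 1)

/-- The variable `x`. -/
def Xv : Big := MvPowerSeries.X 0
/-- The variable `y`. -/
def Yv : Big := MvPowerSeries.X 1

/-- `E(z) = Σ_{n≥0} e_n z^n`, where `z` is the variable `X v`. -/
def Eser (v : Fin 2) : Big :=
  fun d => if ∀ w, w ≠ v → d w = 0 then eSym (d v) else 0

/-- `E'(z) = Σ_{n≥0} (n+1) e_{n+1} z^n`. -/
def Eser' (v : Fin 2) : Big :=
  fun d => if ∀ w, w ≠ v → d w = 0 then ((d v + 1 : ℕ) : SymFun) * eSym (d v + 1) else 0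

/-- `E''(z) = Σ_{n≥0} (n+1)(n+2) e_{n+2} z^n`. -/
def Eser'' (v : Fin 2) : Big :=
  fun d => if ∀ w, w ≠ v → d w = 0 then (((d v + 1) * (d v + 2) : ℕ) : SymFun) * eSym (d v + 2) else 0

/-- `F(z) = E(z) - z E'(z) = Σ_{n≥0} (1-n) e_n z^n`. -/
def Fser (v : Fin 2) : Big :=
  fun d => if ∀ w, w ≠ v → d w = 0 then eSym (d v) - ((d v : ℕ) : SymFun) * eSym (d v) else 0

/-- The partial derivative of a bivariate series with respect to the variable `X v`. -/
def pderiv2 (v : Fin 2) (f : Big) : Big :=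
  fun d => ((d v + 1 : ℕ) : SymFun) * f (d + Finsupp.single v 1)

/-!
Triple deletion: if `uv` is an edge of `G` and `w ∉ {u, v}`, then
`X_{G+wu+wv} + X_G = X_{G+wu} + X_{G+wv}`, since no proper colouring gives `w` the colours of
both `u` and `v`. For `G = C_m ⊔ P_l`, `uv` a cycle edge and `w` an end of the path, both
`G + wu` and `G + wv` are `Tp_{m,l}`, so `2 X_{Tp_{m,l}} = X_{L(Tp_{m,l})} + X_{P_l} X_{C_m}`.
Deleting from `L(Tp_{m,l+1})` the two triangle edges at a cycle vertex `w` leaves a path on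
`m + l + 1` vertices, and adding back either edge gives `Tp_{m,l+1}` or `Tp_{m+1,l}`, so
`X_{L(Tp_{m,l+1})} + X_{P_{m+l+1}} = X_{Tp_{m,l+1}} + X_{Tp_{m+1,l}}`. Eliminating the tadpoles
expresses `X_{L(Tp_{m,l+1})}` through `X_{L(Tp_{m+1,l})}`, and induction on `l` gives the formula.
-/

open SimpleGraph

section ChromaticSymmetric

variable {V W : Type}

def colorClassSizes [Fintype V] (κ : V → ℕ) : ℕ →₀ ℕ :=
  Finsupp.onFinset (univ.image κ) (fun i => Nat.card {v // κ v = i}) fun i hi => by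
    obtain ⟨⟨v, rfl⟩⟩ := (Nat.card_ne_zero.mp hi).1
    exact mem_image_of_mem κ (mem_univ v)

lemma colorClassSizes_apply [Fintype V] (κ : V → ℕ) (i : ℕ) :
    colorClassSizes κ i = Nat.card {v // κ v = i} := rfl

lemma colorClassSizes_comp_equiv [Fintype V] [Fintype W] (κ : W → ℕ) (e : V ≃ W) :
    colorClassSizes (κ ∘ e) = colorClassSizes κ := by
  ext i
  exact Nat.card_congr (e.subtypeEquiv fun _ => Iff.rfl)

lemma colorClassSizes_of_isEmpty [Fintype V] [IsEmpty V] (κ : V → ℕ) :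
    colorClassSizes κ = 0 := by
  ext i
  simp [colorClassSizes_apply]

lemma colorClassSizes_sum [Fintype V] [Fintype W] (κ : V ⊕ W → ℕ) :
    colorClassSizes κ = colorClassSizes (κ ∘ Sum.inl) + colorClassSizes (κ ∘ Sum.inr) := by
  ext i
  exact (Nat.card_congr Equiv.subtypeSum).trans (Nat.card_sum ..)

def IsProperColoring (G : SimpleGraph V) (κ : V → ℕ) : Prop :=
  ∀ v w, G.Adj v w → κ v ≠ κ w

lemma isProperColoring_comp_iso_iff {G : SimpleGraph V} {H : SimpleGraph W} (e : G ≃g H)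
    (κ : W → ℕ) : IsProperColoring G (κ ∘ e) ↔ IsProperColoring H κ := by
  simp only [IsProperColoring, Function.comp_apply]
  refine ⟨fun h v w hvw => ?_, fun h v w hvw => h _ _ (e.map_adj_iff.mpr hvw)⟩
  simpa using h (e.symm v) (e.symm w) (e.symm.map_adj_iff.mpr hvw)

lemma isProperColoring_sum_iff {G : SimpleGraph V} {H : SimpleGraph W} (κ : V ⊕ W → ℕ) :
    IsProperColoring (G ⊕g H) κ ↔
      IsProperColoring G (κ ∘ Sum.inl) ∧ IsProperColoring H (κ ∘ Sum.inr) := by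
  simp [IsProperColoring, Sum.forall]

def properColorings [Fintype V] (G : SimpleGraph V) (d : ℕ →₀ ℕ) : Set (V → ℕ) :=
  {κ | IsProperColoring G κ ∧ colorClassSizes κ = d}

lemma coeff_csf [Fintype V] (G : SimpleGraph V) (d : ℕ →₀ ℕ) :
    MvPowerSeries.coeff d (csf G) = (properColorings G d).ncard := by
  simp only [properColorings, IsProperColoring, Finsupp.ext_iff, colorClassSizes_apply]
  rfl

lemma properColorings_finite [Fintype V] (G : SimpleGraph V) (d : ℕ →₀ ℕ) :
    (properColorings G d).Finite := by
  refine (Set.Finite.pi (t := fun _ : V => (d.support : Set ℕ)) fun _ => d.support.finite_toSet)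
    |>.subset fun κ hκ v _ => ?_
  simp [← hκ.2, colorClassSizes_apply]

lemma csf_congr [Fintype V] [Fintype W] {G : SimpleGraph V} {H : SimpleGraph W} (e : G ≃g H) :
    csf G = csf H := by
  ext d
  rw [coeff_csf, coeff_csf]
  congr 1
  refine Nat.card_congr ((e.toEquiv.arrowCongr (Equiv.refl ℕ)).subtypeEquiv fun κ => ?_)
  change _ ↔ IsProperColoring H (κ ∘ e.symm) ∧ colorClassSizes (κ ∘ e.toEquiv.symm) = d
  rw [isProperColoring_comp_iso_iff e.symm, colorClassSizes_comp_equiv]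
  rfl

lemma csf_of_isEmpty [Fintype V] [IsEmpty V] (G : SimpleGraph V) : csf G = 1 := by
  ext d
  have hP : properColorings G d = if d = 0 then Set.univ else ∅ := by
    ext κ
    simp [properColorings, IsProperColoring, colorClassSizes_of_isEmpty, eq_comm]
  rw [coeff_csf, MvPowerSeries.coeff_one, hP]
  split_ifs <;> simp

lemma properColorings_sup_edge [Fintype V] (G : SimpleGraph V) {a b : V} (hab : a ≠ b)
    (d : ℕ →₀ ℕ) :
    properColorings (G ⊔ edge a b) d = {κ ∈ properColorings G d | κ a ≠ κ b} := by
  ext κ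
  simp only [properColorings, IsProperColoring, Set.mem_ofPred_eq, sup_adj, edge_adj]
  constructor
  · rintro ⟨hκ, hd⟩
    exact ⟨⟨fun v w h => hκ v w (.inl h), hd⟩, hκ a b (.inr ⟨.inl ⟨rfl, rfl⟩, hab⟩)⟩
  · rintro ⟨⟨hκ, hd⟩, hκab⟩
    refine ⟨fun v w => ?_, hd⟩
    rintro (h | ⟨⟨rfl, rfl⟩ | ⟨rfl, rfl⟩, -⟩)
    exacts [hκ v w h, hκab, hκab.symm]

theorem csf_sup_edge_sup_edge_add_csf [Fintype V] (G : SimpleGraph V) {u v w : V}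
    (huv : G.Adj u v) (hwu : w ≠ u) (hwv : w ≠ v) :
    csf (G ⊔ edge w u ⊔ edge w v) + csf G = csf (G ⊔ edge w u) + csf (G ⊔ edge w v) := by
  ext d
  simp only [map_add, coeff_csf, properColorings_sup_edge _ hwu, properColorings_sup_edge _ hwv]
  set S := properColorings G d
  set A := {κ ∈ S | κ w ≠ κ u}
  set B := {κ ∈ S | κ w ≠ κ v}
  have hS : S.Finite := properColorings_finite G d
  have hunion : A ∪ B = S := by
    refine (Set.union_subset (Set.sep_subset _ _) (Set.sep_subset _ _)).antisymm fun κ hκ => ?_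
    by_contra h
    simp only [Set.mem_union, Set.mem_ofPred_eq, not_or, not_and, not_not] at h
    exact hκ.1 u v huv ((h.1 hκ).symm.trans (h.2 hκ))
  have hinter : {κ ∈ A | κ w ≠ κ v} = A ∩ B := by
    ext κ
    simp only [A, B, Set.mem_ofPred_eq, Set.mem_inter_iff]
    tauto
  have := Set.ncard_union_add_ncard_inter A B (hS.subset (Set.sep_subset _ _))
    (hS.subset (Set.sep_subset _ _))
  rw [hunion, ← hinter] at this
  exact_mod_cast (add_comm _ _).trans this

def properColoringsSumFiberEquiv [Fintype V] [Fintype W] (G : SimpleGraph V)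
    (H : SimpleGraph W) (d : ℕ →₀ ℕ) (p : (ℕ →₀ ℕ) × (ℕ →₀ ℕ)) (hp : p.1 + p.2 = d) :
    {κ : properColorings (G ⊕g H) d //
        (colorClassSizes (κ.1 ∘ Sum.inl), colorClassSizes (κ.1 ∘ Sum.inr)) = p} ≃
      properColorings G p.1 × properColorings H p.2 where
  toFun κ :=
    (⟨κ.1.1 ∘ Sum.inl, ((isProperColoring_sum_iff _).mp κ.1.2.1).1, congrArg Prod.fst κ.2⟩,
      ⟨κ.1.1 ∘ Sum.inr, ((isProperColoring_sum_iff _).mp κ.1.2.1).2, congrArg Prod.snd κ.2⟩)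
  invFun κ := ⟨⟨Sum.elim κ.1.1 κ.2.1, (isProperColoring_sum_iff _).mpr ⟨κ.1.2.1, κ.2.2.1⟩,
    by rw [colorClassSizes_sum, Sum.elim_comp_inl, Sum.elim_comp_inr, κ.1.2.2, κ.2.2.2, hp]⟩,
    show (colorClassSizes κ.1.1, colorClassSizes κ.2.1) = p by rw [κ.1.2.2, κ.2.2.2]⟩
  left_inv κ := by
    ext x
    cases x <;> rfl
  right_inv _ := rfl

theorem csf_sum [Fintype V] [Fintype W] (G : SimpleGraph V) (H : SimpleGraph W) :
    csf (G ⊕g H) = csf G * csf H := by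
  ext d
  have := (properColorings_finite (G ⊕g H) d).to_subtype
  let sizes (κ : properColorings (G ⊕g H) d) : antidiagonal d :=
    ⟨(colorClassSizes (κ.1 ∘ Sum.inl), colorClassSizes (κ.1 ∘ Sum.inr)), by
      rw [HasAntidiagonal.mem_antidiagonal, ← colorClassSizes_sum, κ.2.2]⟩
  rw [MvPowerSeries.coeff_mul, coeff_csf, ← Nat.card_coe_set_eq,
    ← Nat.card_congr (Equiv.sigmaFiberEquiv sizes), Nat.card_sigma,
    ← Finset.sum_coe_sort (HasAntidiagonal.antidiagonal d)]
  push_cast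
  refine Finset.sum_congr rfl fun p _ => ?_
  rw [coeff_csf, coeff_csf, ← Nat.card_coe_set_eq, ← Nat.card_coe_set_eq, ← Nat.cast_mul,
    ← Nat.card_prod, ← Nat.card_congr
      (properColoringsSumFiberEquiv G H d p (HasAntidiagonal.mem_antidiagonal.mp p.2))]
  exact congrArg _ (Nat.card_congr (Equiv.subtypeEquivRight fun κ => Subtype.ext_iff))

end ChromaticSymmetric

def SimpleGraph.Iso.supEdge {V W : Type} {G : SimpleGraph V} {H : SimpleGraph W} (e : G ≃g H)
    (a b : V) : G ⊔ edge a b ≃g H ⊔ edge (e a) (e b) where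
  toEquiv := e.toEquiv
  map_rel_iff' := by simp [edge_adj, e.injective.eq_iff, e.map_adj_iff]

lemma val_add_one_mod_eq_coe_finRotate {n : ℕ} (i : Fin (n + 1)) :
    ((i : ℕ) + 1) % (n + 1) = finRotate (n + 1) i := by
  rw [finRotate_apply, Fin.val_add_one]
  split_ifs with h
  · simp [h]
  · exact Nat.mod_eq_of_lt (by have := Fin.val_lt_last h; omega)

lemma cycleG_adj (n : ℕ) (i j : Fin (n + 1)) :
    (cycleG (n + 1)).Adj i j ↔ i ≠ j ∧ (finRotate _ i = j ∨ finRotate _ j = i) := by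
  simp only [cycleG, fromRel_adj, val_add_one_mod_eq_coe_finRotate, Fin.val_inj]

def cycleGRotate (n : ℕ) : cycleG (n + 1) ≃g cycleG (n + 1) where
  toEquiv := finRotate (n + 1)
  map_rel_iff' := by simp [cycleG_adj]

lemma tadpole_zero (m : ℕ) : tadpole m 0 = cycleG m ⊕g pathG 0 := by
  ext (i | i) (j | j)
  · simp [tadpole, cycleG]
  all_goals first | exact i.elim0 | exact j.elim0

lemma lineTadpole_zero (m : ℕ) : lineTadpole m 0 = cycleG m ⊕g pathG 0 := by
  ext (i | i) (j | j)
  · simp [lineTadpole, cycleG]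
  all_goals first | exact i.elim0 | exact j.elim0

lemma tadpole_succ (m l : ℕ) :
    tadpole (m + 1) (l + 1) = (cycleG (m + 1) ⊕g pathG (l + 1)) ⊔ edge (.inr 0) (.inl 0) := by
  ext (i | i) (j | j) <;>
    simp only [tadpole, cycleG, pathG, sup_adj, sum_adj, edge_adj, fromRel_adj, ne_eq,
      Sum.inl.injEq, Sum.inr.injEq, reduceCtorEq, Fin.ext_iff, Fin.val_zero] <;>
    grind

lemma lineTadpole_eq_tadpole_sup_edge (m l : ℕ) :
    lineTadpole (m + 2) (l + 1) = tadpole (m + 2) (l + 1) ⊔ edge (.inr 0) (.inl 1) := by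
  ext (i | i) (j | j) <;>
    simp only [tadpole, lineTadpole, sup_adj, edge_adj, fromRel_adj, ne_eq, Sum.inl.injEq,
      Sum.inr.injEq, reduceCtorEq, Fin.ext_iff, Fin.val_zero, Fin.val_one] <;>
    grind

-- The cycle `v₀ v₁ ⋯ v_m` is relabelled as the path `v₁ ⋯ v_m v₀` closed by the chord
-- `v₀ v₁`, so that the tail, attached at `v₀`, continues the path.
def tadpoleIsoPath (m l : ℕ) :
    tadpole (m + 1) l ≃g pathG (m + 1 + l) ⊔ edge ⟨0, by omega⟩ ⟨m, by omega⟩ where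
  toEquiv := (Equiv.sumCongr (finRotate (m + 1)).symm (Equiv.refl _)).trans finSumFinEquiv
  map_rel_iff' {a b} := by
    rcases a with i | i <;> rcases b with j | j <;>
      (try obtain ⟨i, rfl⟩ := (finRotate (m + 1)).surjective i) <;>
      (try obtain ⟨j, rfl⟩ := (finRotate (m + 1)).surjective j) <;>
      simp only [tadpole, pathG, sup_adj, edge_adj, fromRel_adj, ne_eq, Sum.inl.injEq,
        Sum.inr.injEq, reduceCtorEq, Fin.ext_iff, Equiv.trans_apply, Equiv.sumCongr_apply,
        Sum.map_inl, Sum.map_inr, Equiv.symm_apply_apply, finSumFinEquiv_apply_left,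
        finSumFinEquiv_apply_right, Fin.val_castAdd, Fin.val_natAdd, Equiv.refl_apply,
        val_add_one_mod_eq_coe_finRotate, coe_finRotate, Fin.val_last] <;>
      grind

lemma csf_tadpole_eq_csf_pathG_sup_edge (m l N : ℕ) (hN : m + 1 + l = N) :
    csf (tadpole (m + 1) l) = csf (pathG N ⊔ edge ⟨0, by omega⟩ ⟨m, by omega⟩) := by
  subst hN
  exact csf_congr (tadpoleIsoPath m l)

lemma csf_lineTadpole_eq_csf_pathG_sup_edge_sup_edge (m l N : ℕ)
    (hN : m + 2 + (l + 1) = N) :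
    csf (lineTadpole (m + 2) (l + 1)) = csf (pathG N ⊔ edge ⟨0, by omega⟩ ⟨m + 1, by omega⟩ ⊔
      edge ⟨0, by omega⟩ ⟨m + 2, by omega⟩) := by
  subst hN
  have h₁ : tadpoleIsoPath (m + 1) (l + 1) (.inl 1) = ⟨0, by omega⟩ := by
    change Fin.castAdd _ ((finRotate (m + 2)).symm 1) = _
    rw [(finRotate _).symm_apply_eq.mpr (by rw [finRotate_apply, zero_add])]
    rfl
  rw [lineTadpole_eq_tadpole_sup_edge, csf_congr ((tadpoleIsoPath (m + 1) (l + 1)).supEdge _ _),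
    h₁, edge_comm (tadpoleIsoPath (m + 1) (l + 1) (.inr 0))]
  rfl

lemma csf_lineTadpole_add_csf_pathG (m l : ℕ) :
    csf (lineTadpole (m + 2) (l + 1)) + csf (pathG (m + 3 + l)) =
      csf (tadpole (m + 2) (l + 1)) + csf (tadpole (m + 3) l) := by
  have hadj : (pathG (m + 3 + l)).Adj ⟨m + 1, by omega⟩ ⟨m + 2, by omega⟩ := by simp [pathG]
  rw [csf_lineTadpole_eq_csf_pathG_sup_edge_sup_edge m l (m + 3 + l) (by omega),
    csf_tadpole_eq_csf_pathG_sup_edge (m + 1) (l + 1) (m + 3 + l) (by omega),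
    csf_tadpole_eq_csf_pathG_sup_edge (m + 2) l (m + 3 + l) (by omega)]
  exact csf_sup_edge_sup_edge_add_csf _ hadj (by simp) (by simp)

lemma two_mul_csf_tadpole (m l : ℕ) :
    2 * csf (tadpole (m + 2) l) =
      csf (lineTadpole (m + 2) l) + csf (pathG l) * csf (cycleG (m + 2)) := by
  cases l with
  | zero =>
    rw [tadpole_zero, lineTadpole_zero, csf_sum, csf_of_isEmpty (pathG 0)]
    ring
  | succ l =>
    rw [lineTadpole_eq_tadpole_sup_edge, tadpole_succ]
    set G := cycleG (m + 2) ⊕g pathG (l + 1)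
    have hadj : G.Adj (.inl 0) (.inl 1) := by simp [G, cycleG_adj, finRotate_apply]
    have hrot : csf (G ⊔ edge (.inr 0) (.inl 0)) = csf (G ⊔ edge (.inr 0) (.inl 1)) :=
      csf_congr ((Iso.sumCongr (cycleGRotate (m + 1)) Iso.refl).supEdge _ _)
    have hG : csf G = csf (pathG (l + 1)) * csf (cycleG (m + 2)) := by rw [csf_sum, mul_comm]
    linear_combination hrot + hG -
      csf_sup_edge_sup_edge_add_csf G hadj (w := .inr 0) (by simp) (by simp)

lemma csf_lineTadpole_succ (m l : ℕ) :
    csf (lineTadpole (m + 2) (l + 1)) =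
      csf (lineTadpole (m + 3) l) + csf (pathG l) * csf (cycleG (m + 3)) +
        csf (pathG (l + 1)) * csf (cycleG (m + 2)) - 2 * csf (pathG (m + 3 + l)) := by
  linear_combination 2 * csf_lineTadpole_add_csf_pathG m l + two_mul_csf_tadpole m (l + 1) +
    two_mul_csf_tadpole (m + 1) l

lemma Finset.sum_Icc_one_succ' {M : Type*} [AddCommMonoid M] (f : ℕ → M) (n : ℕ) :
    ∑ k ∈ Icc 1 (n + 1), f k = f 1 + ∑ k ∈ Icc 1 n, f (k + 1) := by
  induction n with
  | zero => simp
  | succ n ih => rw [sum_Icc_succ_top (by omega), ih, sum_Icc_succ_top (by omega), add_assoc]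

theorem lineTadpole_csf_formula (m l : ℕ) (hm : 2 ≤ m) :
    csf (lineTadpole m l) =
      csf (pathG l) * csf (cycleG m) +
        2 * ∑ k ∈ Finset.Icc 1 l, csf (pathG (l - k)) * csf (cycleG (m + k)) -
        ((2 * l : ℕ) : SymFun) * csf (pathG (m + l)) := by
  induction l generalizing m with
  | zero => simp [lineTadpole_zero, csf_sum, csf_of_isEmpty]
  | succ l ih =>
    obtain ⟨m, rfl⟩ := Nat.exists_eq_add_of_le' hm
    have hsum : ∑ k ∈ Icc 1 (l + 1), csf (pathG (l + 1 - k)) * csf (cycleG (m + 2 + k)) =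
        csf (pathG l) * csf (cycleG (m + 3)) +
          ∑ k ∈ Icc 1 l, csf (pathG (l - k)) * csf (cycleG (m + 3 + k)) := by
      rw [sum_Icc_one_succ', Nat.add_sub_cancel]
      congr 1
      refine sum_congr rfl fun k _ => ?_
      rw [Nat.add_sub_add_right, show m + 2 + (k + 1) = m + 3 + k by omega]
    rw [csf_lineTadpole_succ, ih (m + 3) (by omega), hsum,
      show m + 2 + (l + 1) = m + 3 + l by omega]
    push_cast
    ring

end
end

section
/- In the ring of formal power series in x and y over the ring of symmetric functions, the double power-sum generating function satisfies the (denominator-cleared) identity (x−y)·E(x)·E(y)·(1 + Σ_{a,b≥1} (−1)^{a+b+1} p_{a+b} x^a y^b) = x·F(y)·E(x) − y·F(x)·E(y). -/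
/-!
Put `A(z) = Σ_{k ≥ 1} (-1)^(k+1) p_k z^k`. Newton's identities say `E(z) A(z) = z E'(z)`, so
`F = E (1 - A)`, and the double sum telescopes:
`(x - y) Σ_{a,b ≥ 1} (-1)^(a+b+1) p_{a+b} x^a y^b = y A(x) - x A(y)`.
The identity is then a ring computation.

Newton's identities in countably many variables come from the finite-variable ones
(`MvPolynomial.mul_esymm_eq_sum`):
a coefficient only involves the variables of its monomial, and killing all other variables sends
`e_n` and `p_k` to `esymm` and `psum`.
-/

open Finset

noncomputable section

namespace Finsupp

variable {α β : Type*}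

theorem sum_single_one_eq_iff [DecidableEq α] (t : Finset α) (x : α →₀ ℕ) :
    ∑ i ∈ t, single i 1 = x ↔ (∀ i, x i ≤ 1) ∧ t = x.support := by
  simp only [Finsupp.ext_iff, finsetSum_apply, single_apply, Finset.sum_ite_eq',
    Finset.ext_iff, mem_support_iff]
  constructor
  · intro h
    exact ⟨fun i => by rw [← h]; split_ifs <;> simp, fun i => by rw [← h]; split_ifs <;> simp_all⟩
  · rintro ⟨h1, h2⟩ i
    have := h1 i
    have := h2 i
    split_ifs <;> grind

theorem degree_eq_card_support {x : α →₀ ℕ} (hx : ∀ i, x i ≤ 1) :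
    x.degree = x.support.card := by
  rw [degree_apply, Finset.card_eq_sum_ones]
  refine Finset.sum_congr rfl fun i hi => ?_
  have := hx i
  have := mem_support_iff.mp hi
  omega

theorem degree_embDomain {M : Type*} [AddCommMonoid M] (e : α ↪ β) (x : α →₀ M) :
    (x.embDomain e).degree = x.degree := by
  simp [degree_apply]

theorem forall_embDomain_le_iff {M : Type*} [AddCommMonoid M] [PartialOrder M]
    [CanonicallyOrderedAdd M] (e : α ↪ β) (x : α →₀ M) (c : M) :
    (∀ b, x.embDomain e b ≤ c) ↔ ∀ a, x a ≤ c := by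
  refine ⟨fun h a => by simpa using h (e a), fun h b => ?_⟩
  by_cases hb : b ∈ Set.range e
  · obtain ⟨a, rfl⟩ := hb
    simpa using h a
  · simp [embDomain_of_notMem_range _ _ _ hb]

theorem exists_embDomain_eq_single_iff {M : Type*} [AddCommMonoid M] (e : α ↪ β) (x : α →₀ M)
    {c : M} (hc : c ≠ 0) : (∃ b, x.embDomain e = single b c) ↔ ∃ a, x = single a c := by
  refine ⟨fun ⟨b, hb⟩ => ?_, fun ⟨a, ha⟩ => ⟨e a, by rw [ha, embDomain_single]⟩⟩
  by_cases hbe : b ∈ Set.range e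
  · obtain ⟨a, rfl⟩ := hbe
    exact ⟨a, embDomain_injective e (by rw [hb, embDomain_single])⟩
  · have := congrArg (· b) hb
    simp [embDomain_of_notMem_range _ _ _ hbe, hc.symm] at this

end Finsupp

namespace MvPolynomial

variable (σ R : Type*) [Fintype σ]

theorem coeff_esymm [CommSemiring R] [DecidableEq σ] (n : ℕ) (x : σ →₀ ℕ) :
    coeff x (esymm σ R n) = if (∀ i, x i ≤ 1) ∧ x.degree = n then 1 else 0 := by
  simp_rw [esymm_eq_sum_monomial, coeff_sum, coeff_monomial, Finsupp.sum_single_one_eq_iff]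
  by_cases hx : ∀ i, x i ≤ 1
  · simp [hx, Finsupp.degree_eq_card_support hx]
  · simp [hx]

theorem coeff_psum [CommSemiring R] [DecidableEq σ] {k : ℕ} (hk : k ≠ 0) (x : σ →₀ ℕ) :
    coeff x (psum σ R k) = if ∃ i, x = Finsupp.single i k then 1 else 0 := by
  simp only [psum, coeff_sum, coeff_X_pow]
  split_ifs with h
  · obtain ⟨i, rfl⟩ := h
    simp [Finsupp.single_left_inj hk]
  · push Not at h
    exact Finset.sum_eq_zero fun i _ => if_neg (h i).symm

theorem sum_antidiagonal_esymm_mul_psum [CommRing R] (n : ℕ) :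
    ∑ a ∈ antidiagonal n with a.1 < n, esymm σ R a.1 * ((-1) ^ (a.2 + 1) * psum σ R a.2) =
      n * esymm σ R n := by
  rw [mul_esymm_eq_sum, Finset.mul_sum]
  refine Finset.sum_congr rfl fun a ha => ?_
  rw [← mem_antidiagonal.mp (mem_filter.mp ha).1, pow_add, pow_succ, pow_succ]
  ring_nf
  simp

end MvPolynomial

namespace MvPowerSeries

theorem eq_of_forall_killCompl_eq {τ R : Type*} [CommSemiring R] {f g : MvPowerSeries τ R}
    (h : ∀ s : Finset τ, killCompl (Function.Embedding.subtype (· ∈ s)) f =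
      killCompl (Function.Embedding.subtype (· ∈ s)) g) : f = g := by
  ext d
  obtain ⟨x, hx⟩ := (Finsupp.mem_range_embDomain_iff
    (Function.Embedding.subtype (· ∈ d.support)) d).mpr (by intro i hi; simpa using hi)
  rw [← hx, ← coeff_killCompl, ← coeff_killCompl, h]

theorem coeff_X_mul {σ R : Type*} [Semiring R]
    (f : MvPowerSeries σ R) (s : σ) (d : σ →₀ ℕ) :
    coeff d (X s * f) = if d s = 0 then 0 else coeff (d - Finsupp.single s 1) f := by
  simp only [X_def, coeff_monomial_mul, one_mul, Finsupp.single_le_iff]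
  split_ifs <;> first | rfl | omega

end MvPowerSeries

namespace PowerSeries

open Classical in
theorem coeff_toMvPowerSeries {σ R : Type*} [CommSemiring R] (f : PowerSeries R)
    (i : σ) (d : σ →₀ ℕ) :
    MvPowerSeries.coeff d (f.toMvPowerSeries i) =
      if ∀ j, j ≠ i → d j = 0 then coeff (d i) f else 0 := by
  rw [toMvPowerSeries_apply]
  split_ifs with hd
  · have hd' : d = Finsupp.single i (d i) := by
      ext j
      by_cases hj : j = i
      · simp [hj]
      · simp [hd j hj, Ne.symm hj]
    have := MvPowerSeries.coeff_embDomain_rename (Function.Embedding.punit i) f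
      (Finsupp.single () (d i))
    rw [Finsupp.embDomain_single] at this
    rw [hd', Finsupp.single_eq_same]
    exact this
  · push Not at hd
    obtain ⟨j, hji, hj⟩ := hd
    refine MvPowerSeries.coeff_rename_eq_zero _ _ fun ⟨y, hy⟩ => hj ?_
    rw [← hy, Finsupp.mapDomain_of_notMem_range]
    rintro ⟨u, rfl⟩
    exact hji rfl

end PowerSeries

section SymFun

open MvPowerSeries

theorem pSym_zero : pSym 0 = 0 := by
  ext d
  rw [map_zero, coeff_apply, pSym]
  exact if_neg fun h => h.1 rfl

variable {σ : Type*} [Fintype σ] (e : σ ↪ ℕ)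

theorem killCompl_eSym (n : ℕ) :
    killCompl e (eSym n) = (MvPolynomial.esymm σ ℚ n : MvPowerSeries σ ℚ) := by
  classical
  ext x
  simp only [coeff_killCompl, MvPolynomial.coeff_coe, MvPolynomial.coeff_esymm,
    ← Finsupp.degree_embDomain e, ← Finsupp.forall_embDomain_le_iff e]
  exact if_congr Iff.rfl rfl rfl

theorem killCompl_pSym {k : ℕ} (hk : k ≠ 0) :
    killCompl e (pSym k) = (MvPolynomial.psum σ ℚ k : MvPowerSeries σ ℚ) := by
  classical
  ext x
  simp only [coeff_killCompl, MvPolynomial.coeff_coe, MvPolynomial.coeff_psum _ _ hk,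
    ← Finsupp.exists_embDomain_eq_single_iff e x hk]
  exact if_congr (and_iff_right hk) rfl rfl

theorem sum_antidiagonal_eSym_mul_pSym (n : ℕ) :
    ∑ a ∈ antidiagonal n, eSym a.1 * ((-1) ^ (a.2 + 1) * pSym a.2) = n * eSym n := by
  -- Drop the `a.2 = 0` term first: `pSym 0 = 0`, whereas `psum σ ℚ 0 = Fintype.card σ`.
  rw [← Finset.sum_filter_of_ne (p := fun a => a.1 < n)]
  · refine eq_of_forall_killCompl_eq fun s => ?_
    simp only [map_sum, map_mul, map_pow, map_neg, map_one, map_natCast, killCompl_eSym]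
    rw [Finset.sum_congr rfl fun a ha => by
      obtain ⟨hsum, hlt⟩ := mem_filter.mp ha
      rw [killCompl_pSym _ (by have := mem_antidiagonal.mp hsum; omega)]]
    have h := congrArg MvPolynomial.coeToMvPowerSeries.ringHom
      (MvPolynomial.sum_antidiagonal_esymm_mul_psum s ℚ n)
    simp only [map_sum, map_mul, map_pow, map_neg, map_one, map_natCast,
      MvPolynomial.coeToMvPowerSeries.ringHom_apply] at h
    exact h
  · rintro ⟨j, k⟩ hjk hne
    have : k ≠ 0 := fun hk => hne (by simp [hk, pSym_zero])
    have := mem_antidiagonal.mp hjk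
    simp only
    omega

end SymFun

theorem coeff_gf2 (c : ℕ → ℕ → SymFun) (d : Fin 2 →₀ ℕ) :
    MvPowerSeries.coeff d (gf2 c) = c (d 0) (d 1) := rfl

def signedPowerSumSeries : PowerSeries SymFun := PowerSeries.mk fun k => (-1) ^ (k + 1) * pSym k

theorem mk_eSym_mul_signedPowerSumSeries :
    PowerSeries.mk eSym * signedPowerSumSeries = PowerSeries.mk fun n => (n : SymFun) * eSym n := by
  refine PowerSeries.ext fun n => ?_
  simp only [PowerSeries.coeff_mul, PowerSeries.coeff_mk, signedPowerSumSeries]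
  exact sum_antidiagonal_eSym_mul_pSym n

theorem Eser_eq_toMvPowerSeries (v : Fin 2) :
    Eser v = (PowerSeries.mk eSym).toMvPowerSeries v := by
  refine MvPowerSeries.ext fun d => ?_
  rw [PowerSeries.coeff_toMvPowerSeries, PowerSeries.coeff_mk]
  show Eser v d = _
  unfold Eser
  split_ifs <;> rfl

theorem Fser_eq_Eser_mul_one_sub (v : Fin 2) :
    Fser v = Eser v * (1 - signedPowerSumSeries.toMvPowerSeries v) := by
  rw [Eser_eq_toMvPowerSeries, ← map_one (PowerSeries.toMvPowerSeries v), ← map_sub, ← map_mul,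
    mul_sub, mul_one, mk_eSym_mul_signedPowerSumSeries, map_sub]
  refine MvPowerSeries.ext fun d => ?_
  rw [map_sub, PowerSeries.coeff_toMvPowerSeries, PowerSeries.coeff_toMvPowerSeries,
    PowerSeries.coeff_mk, PowerSeries.coeff_mk]
  show Fser v d = _
  unfold Fser
  split_ifs <;> simp

theorem Xv_sub_Yv_mul_gf2 :
    (Xv - Yv) * gf2 (fun a b =>
        if 1 ≤ a ∧ 1 ≤ b then (-1 : SymFun) ^ (a + b + 1) * pSym (a + b) else 0) =
      Yv * signedPowerSumSeries.toMvPowerSeries 0 -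
        Xv * signedPowerSumSeries.toMvPowerSeries 1 := by
  refine MvPowerSeries.ext fun d => ?_
  simp only [Xv, Yv, sub_mul, map_sub, MvPowerSeries.coeff_X_mul,
    PowerSeries.coeff_toMvPowerSeries, Fin.forall_fin_two, coeff_gf2,
    Finsupp.tsub_apply, Finsupp.single_apply, signedPowerSumSeries, PowerSeries.coeff_mk]
  generalize d 0 = a, d 1 = b
  rcases a with _ | _ | a <;> rcases b with _ | _ | b <;> simp [pSym_zero] <;> ring_nf

theorem powerSum_double_generating_function :
    (Xv - Yv) * Eser 0 * Eser 1 *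
        (1 + gf2 (fun a b => if 1 ≤ a ∧ 1 ≤ b then (-1 : SymFun) ^ (a + b + 1) * pSym (a + b) else 0)) =
      Xv * Fser 1 * Eser 0 - Yv * Fser 0 * Eser 1 := by
  rw [Fser_eq_Eser_mul_one_sub 0, Fser_eq_Eser_mul_one_sub 1]
  linear_combination (Eser 0 * Eser 1) * Xv_sub_Yv_mul_gf2

end
end
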